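/- arXiv:1712.07231 — 6 statements merged into one kernel-verified Lean document; each statement's English description precedes it below -/
import Mathlib

section
/- Under Assumption A (for every $A\in\mathscr{A}$ and $s\ge 0$, $\bigcup_{x\in A}\Phi_x(s)$ is precompact in $\mathcal{E}$), if the family $\{X^\epsilon_x\}$ satisfies the uniform Laplace principle over $\mathscr{A}$, then the Freidlin-Wentzell uniform lower bound holds: for every $A\in\mathscr{A}$, $s_0>0$, $\delta>0$, $\liminf_{\epsilon\to 0}\inf_{x\in A}\inf_{\varphi\in\Phi_x(s_0)}\big(a(\epsilon)\log\mathbb{P}(\rho(X^\epsilon_x,\varphi)<\delta)+I_x(\varphi)\big)\ge 0$. -/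
/-!
Cover the precompact set `⋃_{x ∈ A} Φ_x(s₀)` by finitely many balls `B(t, r)`, `r = δ/3`, and test
the Laplace principle against the ramp `h_t = M · clamp(ρ(·, t)/r - 1)` with `M = s₀ + η`, which
vanishes on `B̄(t, r)` and equals `M` off `B(t, 2r)`. For `φ ∈ Φ_x(s₀) ∩ B(t, r)` the variational
term is at most `I_x(φ)`, so `𝔼 exp(-h_t(X)/a) ≥ exp(-(I_x(φ) + η/2)/a)`, while the expectation is
at most `ℙ(X ∈ B(t, 2r)) + exp(-M/a)`. Once `a log 2 ≤ η/2`, the second term is at most half the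
lower bound, whence `a log ℙ(ρ(X, φ) < δ) ≥ -I_x(φ) - η`. Only the finitely many test functions
`h_t` are involved, so the uniformity over `x ∈ A` of the Laplace principle is enough.
-/

open MeasureTheory Filter Topology
open scoped ENNReal NNReal BoundedContinuousFunction

noncomputable def distRamp {E : Type*} [PseudoMetricSpace E] (M r : ℝ) (t : E) : E →ᵇ ℝ :=
  BoundedContinuousFunction.ofNormedAddCommGroup
    (fun ψ => M * Set.projIcc 0 1 zero_le_one (dist ψ t / r - 1)) (by fun_prop) |M|
    fun ψ => by
      have h := (Set.projIcc 0 1 zero_le_one (dist ψ t / r - 1)).2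
      rw [norm_mul, Real.norm_eq_abs, Real.norm_eq_abs, abs_of_nonneg h.1]
      exact mul_le_of_le_one_right (abs_nonneg M) h.2

section distRamp

variable {E : Type*} [PseudoMetricSpace E] {M r : ℝ} {t ψ : E}

theorem distRamp_apply : distRamp M r t ψ = M * Set.projIcc 0 1 zero_le_one (dist ψ t / r - 1) :=
  rfl

theorem distRamp_nonneg (hM : 0 ≤ M) : 0 ≤ distRamp M r t ψ :=
  mul_nonneg hM (Set.projIcc 0 1 zero_le_one _).2.1

theorem distRamp_eq_zero (hr : 0 < r) (h : dist ψ t ≤ r) : distRamp M r t ψ = 0 := by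
  rw [distRamp_apply, Set.projIcc_of_le_left]
  · exact mul_zero M
  · rwa [sub_nonpos, div_le_one hr]

theorem distRamp_eq_of_le (hr : 0 < r) (h : 2 * r ≤ dist ψ t) : distRamp M r t ψ = M := by
  rw [distRamp_apply, Set.projIcc_of_right_le]
  · exact mul_one M
  · rw [le_sub_iff_add_le, le_div_iff₀ hr]; linarith

end distRamp

theorem Real.exp_neg_div_le_one {x a : ℝ} (hx : 0 ≤ x) (ha : 0 ≤ a) : Real.exp (-x / a) ≤ 1 :=
  Real.exp_le_one_iff.2 (div_nonpos_of_nonpos_of_nonneg (neg_nonpos.2 hx) ha)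

section LaplaceFunctional

variable {Ω : Type*} [MeasurableSpace Ω] {μ : Measure Ω} {g : Ω → ℝ} {a : ℝ}

theorem integral_exp_neg_div_pos [IsFiniteMeasure μ] [NeZero μ] (hg : Measurable g)
    (hg0 : ∀ ω, 0 ≤ g ω) (ha : 0 ≤ a) : 0 < ∫ ω, Real.exp (-g ω / a) ∂μ := by
  refine integral_exp_pos (Integrable.of_bound (by fun_prop) 1 (ae_of_all _ fun ω => ?_))
  rw [Real.norm_of_nonneg (Real.exp_pos _).le]
  exact Real.exp_neg_div_le_one (hg0 ω) ha

theorem integral_exp_neg_div_le [IsProbabilityMeasure μ] {S : Set Ω} (hS : MeasurableSet S)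
    {M : ℝ} (hg0 : ∀ ω, 0 ≤ g ω) (hgS : ∀ ω ∉ S, g ω = M) (ha : 0 ≤ a) :
    ∫ ω, Real.exp (-g ω / a) ∂μ ≤ μ.real S + Real.exp (-M / a) := by
  have hle : ∀ ω, Real.exp (-g ω / a) ≤ S.indicator 1 ω + Real.exp (-M / a) := by
    intro ω
    by_cases hω : ω ∈ S
    · rw [Set.indicator_of_mem hω, Pi.one_apply]
      exact (Real.exp_neg_div_le_one (hg0 ω) ha).trans (le_add_of_nonneg_right (Real.exp_pos _).le)
    · rw [Set.indicator_of_notMem hω, hgS ω hω, zero_add]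
  calc ∫ ω, Real.exp (-g ω / a) ∂μ
      ≤ ∫ ω, (S.indicator 1 ω + Real.exp (-M / a)) ∂μ :=
        integral_mono_of_nonneg (ae_of_all _ fun ω => (Real.exp_pos _).le)
          (((integrable_const 1).indicator hS).add (integrable_const _)) (ae_of_all _ hle)
    _ = μ.real S + Real.exp (-M / a) := by
        rw [integral_add ((integrable_const 1).indicator hS) (integrable_const _),
          integral_indicator_one hS, integral_const, probReal_univ, one_smul]

end LaplaceFunctional

theorem neg_sub_le_mul_log_of_le_add_exp {a c M Z p : ℝ} (ha : 0 < a) (hZ : 0 < Z)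
    (hc : -c ≤ a * Real.log Z) (hZp : Z ≤ p + Real.exp (-M / a)) (hM : c + a * Real.log 2 ≤ M) :
    0 < p ∧ -c - a * Real.log 2 ≤ a * Real.log p := by
  have hZ_ge : Real.exp (-c / a) ≤ Z := by
    rw [← Real.le_log_iff_exp_le hZ, div_le_iff₀ ha]; linarith
  have hexp_le : Real.exp (-M / a) ≤ Real.exp (-c / a) / 2 := by
    rw [← Real.exp_log two_pos, ← Real.exp_sub, Real.exp_le_exp, le_sub_iff_add_le,
      div_add' _ _ _ ha.ne', div_le_div_iff_of_pos_right ha]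
    linarith
  have hp : Real.exp (-c / a) / 2 ≤ p := by linarith
  have hp0 : 0 < p := lt_of_lt_of_le (by positivity) hp
  refine ⟨hp0, ?_⟩
  calc -c - a * Real.log 2 = a * Real.log (Real.exp (-c / a) / 2) := by
        rw [Real.log_div (Real.exp_pos _).ne' two_ne_zero, Real.log_exp]; field_simp
    _ ≤ a * Real.log p := by gcongr

namespace EReal

theorem neg_sub_le_of_abs_coe_add_lt {L i e : ℝ} {J : EReal}
    (h : ((L : EReal) + J).abs < ENNReal.ofReal e) (hJ : J ≤ i) : -(i + e) ≤ L := by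
  induction J using EReal.rec with
  | bot => simp at h
  | top => simp at hJ
  | coe j =>
    rw [← EReal.coe_add, EReal.abs_def, ENNReal.ofReal_lt_ofReal_iff_of_nonneg (abs_nonneg _)] at h
    have := (abs_lt.1 h).1
    have : j ≤ i := EReal.coe_le_coe_iff.1 hJ
    linarith

theorem coe_le_coe_mul_log_add {a b : ℝ} {m u : ℝ≥0∞} (hm : 0 < m.toReal) (hu : u ≠ ⊤)
    (h : b ≤ a * Real.log m.toReal + u.toReal) : (b : EReal) ≤ a * ENNReal.log m + u := by
  rw [ENNReal.log_pos_real' hm, ← EReal.coe_ennreal_toReal hu, ← EReal.coe_mul, ← EReal.coe_add]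
  exact EReal.coe_le_coe_iff.2 h

theorem zero_le_liminf_of_eventually {α : Type*} {l : Filter α} {F : α → EReal}
    (h : ∀ η : ℝ, 0 < η → ∀ᶠ ε in l, ((-η : ℝ) : EReal) ≤ F ε) : 0 ≤ liminf F l := by
  refine le_of_forall_lt_imp_le_of_dense fun y hy => ?_
  obtain ⟨z, hyz, hz⟩ := EReal.exists_between_coe_real hy
  have hz0 : 0 < -z := neg_pos.2 (EReal.coe_lt_coe_iff.1 hz)
  calc y ≤ ((-(-z) : ℝ) : EReal) := by rw [neg_neg]; exact hyz.le
    _ ≤ liminf F l := le_liminf_of_le (by isBoundedDefault) (h (-z) hz0)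

end EReal

section FreidlinWentzell

variable {E : Type*} [MetricSpace E] [MeasurableSpace E] [OpensMeasurableSpace E]
  {Ω : Type*} [MeasurableSpace Ω] {μ : Measure Ω} [IsProbabilityMeasure μ]

theorem coe_neg_le_mul_log_measure_dist_lt_add {Y : Ω → E} (hY : Measurable Y) {J : E → ℝ≥0∞}
    {a s η r δ : ℝ} (ha : 0 < a) (haη : a * Real.log 2 ≤ η / 2) (hs : 0 ≤ s) (hη : 0 < η)
    (hr : 0 < r) (hδ : 3 * r ≤ δ) {t φ : E} (hφt : dist φ t < r) (hφ : J φ ≤ ENNReal.ofReal s)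
    (hLaplace : EReal.abs
      (((a * Real.log (∫ ω, Real.exp (-(distRamp (s + η) r t (Y ω)) / a) ∂μ) : ℝ) : EReal)
        + ⨅ ψ, (((distRamp (s + η) r t ψ : ℝ) : EReal) + (J ψ : EReal)))
      < ENNReal.ofReal (η / 2)) :
    ((-η : ℝ) : EReal) ≤ (a : EReal) * ENNReal.log (μ {ω | dist (Y ω) φ < δ}) + J φ := by
  set h := distRamp (s + η) r t
  have hJφ : J φ ≠ ⊤ := ne_top_of_le_ne_top ENNReal.ofReal_ne_top hφ
  have hi : (J φ).toReal ≤ s := ENNReal.toReal_le_of_le_ofReal hs hφ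
  have hinf_le : ⨅ ψ, ((h ψ : EReal) + J ψ) ≤ ((J φ).toReal : EReal) := by
    refine (iInf_le _ φ).trans_eq ?_
    rw [distRamp_eq_zero hr hφt.le, EReal.coe_zero, zero_add, EReal.coe_ennreal_toReal hJφ]
  have hball : Y ⁻¹' Metric.ball t (2 * r) ⊆ {ω | dist (Y ω) φ < δ} := fun ω hω => by
    have := dist_triangle (Y ω) t φ
    rw [Set.mem_preimage, Metric.mem_ball] at hω
    show dist (Y ω) φ < δ
    linarith [dist_comm t φ]
  have hZ_le : ∫ ω, Real.exp (-h (Y ω) / a) ∂μ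
      ≤ μ.real {ω | dist (Y ω) φ < δ} + Real.exp (-(s + η) / a) :=
    (integral_exp_neg_div_le (hY Metric.isOpen_ball.measurableSet)
      (fun ω => distRamp_nonneg (by positivity))
      (fun ω hω => distRamp_eq_of_le hr (not_lt.1 hω)) ha.le).trans
      (by gcongr; exact measure_ne_top μ _)
  obtain ⟨hp, hlog⟩ := neg_sub_le_mul_log_of_le_add_exp ha
    (integral_exp_neg_div_pos (h.continuous.measurable.comp hY)
      (fun ω => distRamp_nonneg (by positivity)) ha.le)
    (EReal.neg_sub_le_of_abs_coe_add_lt hLaplace hinf_le) hZ_le (by linarith)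
  rw [measureReal_def] at hp hlog
  exact EReal.coe_le_coe_mul_log_add hp hJφ (by linarith)

end FreidlinWentzell

theorem ulp_implies_fw_uniform_lower_general
    {E : Type*} [MetricSpace E] [MeasurableSpace E] [BorelSpace E]
    {E0 : Type*} {Ω : Type*} [MeasurableSpace Ω] (μ : Measure Ω) [IsProbabilityMeasure μ]
    (X : ℝ → E0 → Ω → E) (hX : ∀ ε x, Measurable (X ε x))
    (a : ℝ → ℝ) (ha_pos : ∀ ε > 0, 0 < a ε)
    (ha : Tendsto a (𝓝[>] (0:ℝ)) (𝓝 0))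
    (I : E0 → E → ℝ≥0∞)
    (𝒜 : Set (Set E0))
    -- Assumption A: for every A ∈ 𝒜 and s ≥ 0, ⋃_{x ∈ A} Φ_x(s) is precompact
    (hcomp : ∀ A ∈ 𝒜, ∀ s : ℝ, 0 ≤ s →
      IsCompact (closure (⋃ x ∈ A, {φ | I x φ ≤ ENNReal.ofReal s})))
    -- the uniform Laplace principle over 𝒜
    (hULP : ∀ A ∈ 𝒜, ∀ h : E →ᵇ ℝ,
      Tendsto (fun ε => ⨆ x ∈ A,
          EReal.abs (((a ε * Real.log (∫ ω, Real.exp (-(h (X ε x ω)) / a ε) ∂μ) : ℝ) : EReal)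
            + ⨅ φ, (((h φ : ℝ) : EReal) + (I x φ : EReal))))
        (𝓝[>] (0:ℝ)) (𝓝 (0 : ℝ≥0∞))) :
    -- the Freidlin-Wentzell uniform lower bound
    ∀ A ∈ 𝒜, ∀ s₀ > (0:ℝ), ∀ δ > (0:ℝ),
      (0 : EReal) ≤ Filter.liminf (fun ε =>
        ⨅ x ∈ A, ⨅ φ ∈ {ψ | I x ψ ≤ ENNReal.ofReal s₀},
          ((a ε : EReal) * ENNReal.log (μ {ω | dist (X ε x ω) φ < δ})
            + (I x φ : EReal))) (𝓝[>] (0:ℝ)) := by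
  intro A hA s₀ hs₀ δ hδ
  refine EReal.zero_le_liminf_of_eventually fun η hη => ?_
  have hr : 0 < δ / 3 := by positivity
  obtain ⟨T, -, hT, hcover⟩ := Metric.finite_approx_of_totallyBounded
    ((hcomp A hA s₀ hs₀.le).totallyBounded.subset subset_closure) (δ / 3) hr
  have ha_small : ∀ᶠ ε in 𝓝[>] (0:ℝ), a ε * Real.log 2 ≤ η / 2 := by
    have := ha.mul_const (Real.log 2)
    rw [zero_mul] at this
    exact this.eventually_le_const (by positivity)
  have hULP_T := (eventually_all_finite hT).2 fun t (_ : t ∈ T) =>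
    (hULP A hA (distRamp (s₀ + η) (δ / 3) t)).eventually_lt_const
      (ENNReal.ofReal_pos.2 (half_pos hη))
  filter_upwards [self_mem_nhdsWithin, ha_small, hULP_T] with ε hε haε hLaplace
  refine le_iInf₂ fun x hx => le_iInf₂ fun φ hφ => ?_
  obtain ⟨t, ht, hφt⟩ := Set.mem_iUnion₂.1 (hcover (Set.mem_biUnion hx hφ))
  exact coe_neg_le_mul_log_measure_dist_lt_add (hX ε x) (ha_pos ε hε) haε hs₀.le hη hr
    (by linarith) hφt hφ ((le_iSup₂_of_le x hx le_rfl).trans_lt (hLaplace t ht))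

/-- Under Assumption A (precompact unions of level sets), the uniform Laplace
principle implies the Freidlin-Wentzell uniform lower bound. -/
theorem ulp_implies_fw_uniform_lower
    {E : Type*} [MetricSpace E] [PolishSpace E] [MeasurableSpace E] [BorelSpace E]
    {E0 : Type*} {Ω : Type*} [MeasurableSpace Ω] (μ : Measure Ω) [IsProbabilityMeasure μ]
    (X : ℝ → E0 → Ω → E) (hX : ∀ ε x, Measurable (X ε x))
    (a : ℝ → ℝ) (ha_pos : ∀ ε > 0, 0 < a ε)
    (ha : Tendsto a (𝓝[>] (0:ℝ)) (𝓝 0))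
    (I : E0 → E → ℝ≥0∞) (hI : ∀ x, LowerSemicontinuous (I x))
    (𝒜 : Set (Set E0))
    -- Assumption A: for every A ∈ 𝒜 and s ≥ 0, ⋃_{x ∈ A} Φ_x(s) is precompact
    (hcomp : ∀ A ∈ 𝒜, ∀ s : ℝ, 0 ≤ s →
      IsCompact (closure (⋃ x ∈ A, {φ | I x φ ≤ ENNReal.ofReal s})))
    -- the uniform Laplace principle over 𝒜
    (hULP : ∀ A ∈ 𝒜, ∀ h : E →ᵇ ℝ,
      Tendsto (fun ε => ⨆ x ∈ A,
          EReal.abs (((a ε * Real.log (∫ ω, Real.exp (-(h (X ε x ω)) / a ε) ∂μ) : ℝ) : EReal)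
            + ⨅ φ, (((h φ : ℝ) : EReal) + (I x φ : EReal))))
        (𝓝[>] (0:ℝ)) (𝓝 (0 : ℝ≥0∞))) :
    -- the Freidlin-Wentzell uniform lower bound
    ∀ A ∈ 𝒜, ∀ s₀ > (0:ℝ), ∀ δ > (0:ℝ),
      (0 : EReal) ≤ Filter.liminf (fun ε =>
        ⨅ x ∈ A, ⨅ φ ∈ {ψ | I x ψ ≤ ENNReal.ofReal s₀},
          ((a ε : EReal) * ENNReal.log (μ {ω | dist (X ε x ω) φ < δ})
            + (I x φ : EReal))) (𝓝[>] (0:ℝ)) :=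
  ulp_implies_fw_uniform_lower_general μ X hX a ha_pos ha I 𝒜 hcomp hULP
end

section
/- Under Assumption A (precompactness of $\bigcup_{x\in A}\Phi_x(s)$ for each $A\in\mathscr{A}$, $s\ge0$), if $\{X^\epsilon_x\}$ satisfies the uniform Laplace principle over $\mathscr{A}$, then the Freidlin-Wentzell uniform upper bound holds: for all $A\in\mathscr{A}$, $s_0>0$, $\delta>0$, $\limsup_{\epsilon\to 0}\sup_{x\in A}\sup_{s\in[0,s_0]}\big(a(\epsilon)\log\mathbb{P}(\mathrm{dist}(X^\epsilon_x,\Phi_x(s))\ge\delta)+s\big)\le 0$. -/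
/-!
Compactness of the closure of `⋃ x ∈ A, Φ_x(s₀)` gives a finite `δ/4`-net, and Urysohn's lemma
one test function for each subset `J` of the net, equal to `s₀` near `J` and to `0` away from it.
For `x ∈ A` and `s ≤ s₀`, one of these functions `h` equals `s₀` on `Φ_x(s)` and vanishes where
`dist(·, Φ_x(s)) ≥ δ`. Markov's inequality and `inf (h + I_x) ≥ s` then bound
`a log P(dist(X, Φ_x(s)) ≥ δ) + s` by the Laplace defect `|a log E e^{-h(X)/a} + inf (h + I_x)|`,
which tends to `0` uniformly in `x ∈ A`, and uniformly over the finitely many `h`.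
-/

open MeasureTheory Filter Topology
open scoped ENNReal BoundedContinuousFunction

lemma EReal.le_coe_abs (x : EReal) : x ≤ (x.abs : EReal) := by
  induction x using EReal.rec with
  | bot => exact bot_le
  | coe y => rw [EReal.coe_abs]; exact EReal.coe_le_coe_iff.2 (le_abs_self y)
  | top => simp

lemma EReal.coe_mul_log_le_of_toReal_le {a : ℝ} (ha : 0 < a) {p : ℝ≥0∞} (hp : p ≠ ⊤) {r : ℝ}
    (hpr : p.toReal ≤ r) : (a : EReal) * ENNReal.log p ≤ ((a * Real.log r : ℝ) : EReal) := by
  rcases eq_or_ne p 0 with rfl | hp0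
  · rw [ENNReal.log_zero, EReal.coe_mul_bot_of_pos ha]
    exact bot_le
  · have hpos : 0 < p.toReal := ENNReal.toReal_pos hp0 hp
    rw [ENNReal.log_pos_real' hpos, ← EReal.coe_mul]
    exact EReal.coe_le_coe_iff.2 (mul_le_mul_of_nonneg_left (Real.log_le_log hpos hpr) ha.le)

lemma EReal.coe_le_iInf_coe_add_coe {E : Type*} {f : E → ℝ} (hf : 0 ≤ f) {I : E → ℝ≥0∞} {s : ℝ}
    (hfs : ∀ φ, I φ ≤ ENNReal.ofReal s → s ≤ f φ) :
    (s : EReal) ≤ ⨅ φ, ((f φ : EReal) + (I φ : EReal)) := by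
  refine le_iInf fun φ => ?_
  by_cases hφ : I φ ≤ ENNReal.ofReal s
  · calc (s : EReal) ≤ f φ := EReal.coe_le_coe_iff.2 (hfs φ hφ)
      _ ≤ _ := le_add_of_nonneg_right (EReal.coe_ennreal_nonneg _)
  · calc (s : EReal) ≤ (ENNReal.ofReal s : EReal) := by
          rw [EReal.coe_ennreal_ofReal]; exact le_max_left (s : EReal) 0
      _ ≤ (I φ : EReal) := EReal.coe_ennreal_le_coe_ennreal_iff.2 (le_of_not_ge hφ)
      _ ≤ (f φ : EReal) + I φ := le_add_of_nonneg_left (EReal.coe_nonneg.2 (hf φ))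

lemma EReal.limsup_le_zero_of_eventually_le_coe {α : Type*} {l : Filter α} [l.NeBot]
    {f : α → EReal} {T : α → ℝ≥0∞} (hT : Tendsto T l (𝓝 0)) (hfT : ∀ᶠ x in l, f x ≤ T x) :
    limsup f l ≤ 0 := by
  have hT' : Tendsto (fun x => (T x : EReal)) l (𝓝 0) :=
    (continuous_coe_ennreal_ereal.tendsto 0).comp hT
  calc limsup f l ≤ limsup (fun x => (T x : EReal)) l := limsup_le_limsup hfT
    _ = 0 := hT'.limsup_eq

section Separation

open Set Metric

lemma TotallyBounded.exists_finite_separating_bcf {E : Type*} [PseudoMetricSpace E] {K : Set E}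
    (hK : TotallyBounded K) {δ c : ℝ} (hδ : 0 < δ) (hc : 0 ≤ c) :
    ∃ H : Set (E →ᵇ ℝ), H.Finite ∧ (∀ g ∈ H, 0 ≤ g) ∧ ∀ Φ ⊆ K, ∃ g ∈ H,
      EqOn g (Function.const E c) Φ ∧ EqOn g 0 {z | ENNReal.ofReal δ ≤ infEDist z Φ} := by
  obtain ⟨Y, hYfin, hKY⟩ := totallyBounded_iff.1 hK (δ / 4) (by positivity)
  have hdisj (J : Set E) : Disjoint (thickening (δ / 2) J)ᶜ (cthickening (δ / 4) J) :=
    disjoint_compl_left_iff_subset.2 (cthickening_subset_thickening' (by positivity) (by linarith) J)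
  choose G hG0 hGc hGmem using fun J : Set E =>
    exists_bounded_mem_Icc_of_closed_of_le isOpen_thickening.isClosed_compl isClosed_cthickening
      (hdisj J) hc
  refine ⟨G '' 𝒫 Y, hYfin.powerset.image G, ?_, fun Φ hΦ => ?_⟩
  · rintro _ ⟨J, -, rfl⟩ z
    exact (hGmem J z).1
  set J := Y ∩ thickening (δ / 4) Φ
  refine ⟨G J, mem_image_of_mem G inter_subset_left, fun φ hφ => hGc J ?_, fun z hz => hG0 J ?_⟩
  · obtain ⟨y, hyY, hφy⟩ := mem_iUnion₂.1 (hKY (hΦ hφ))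
    refine mem_cthickening_of_dist_le φ y _ J ⟨hyY, ?_⟩ (mem_ball.1 hφy).le
    exact mem_thickening_iff.2 ⟨φ, hφ, by rw [dist_comm]; exact mem_ball.1 hφy⟩
  · intro hzJ
    have hz' : z ∈ thickening (δ / 2 + δ / 4) Φ :=
      thickening_thickening_subset _ _ _ (thickening_subset_of_subset _ inter_subset_right hzJ)
    rw [mem_thickening_iff_infEDist_lt] at hz'
    exact absurd (hz.trans_lt hz') (not_lt.2 (ENNReal.ofReal_le_ofReal (by linarith)))

end Separation

section Laplace

variable {E Ω : Type*} [TopologicalSpace E] [MeasurableSpace E] [MeasurableSpace Ω]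

noncomputable def laplaceDefect (μ : Measure Ω) (Y : Ω → E) (a : ℝ) (I : E → ℝ≥0∞)
    (h : E →ᵇ ℝ) : ℝ≥0∞ :=
  EReal.abs (((a * Real.log (∫ ω, Real.exp (-(h (Y ω)) / a) ∂μ) : ℝ) : EReal)
    + ⨅ φ, (((h φ : ℝ) : EReal) + (I φ : EReal)))

lemma mul_log_measure_preimage_add_le_laplaceDefect [OpensMeasurableSpace E] {μ : Measure Ω}
    [IsFiniteMeasure μ] {Y : Ω → E} (hY : Measurable Y) {a : ℝ} (ha : 0 < a)
    {I : E → ℝ≥0∞} {g : E →ᵇ ℝ} (hg : 0 ≤ g) {F : Set E} (hgF : Set.EqOn g 0 F) {s : ℝ}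
    (hgs : ∀ φ, I φ ≤ ENNReal.ofReal s → s ≤ g φ) :
    (a : EReal) * ENNReal.log (μ (Y ⁻¹' F)) + s ≤ laplaceDefect μ Y a I g := by
  set f : Ω → ℝ := fun ω => Real.exp (-(g (Y ω)) / a)
  have hf_int : Integrable f μ := by
    have hf_meas : Measurable f :=
      Real.measurable_exp.comp ((g.continuous.measurable.comp hY).neg.div_const a)
    refine (integrable_const (1 : ℝ)).mono' hf_meas.aestronglyMeasurable (ae_of_all _ fun ω => ?_)
    rw [Real.norm_eq_abs, abs_of_pos (Real.exp_pos _), Real.exp_le_one_iff]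
    exact div_nonpos_of_nonpos_of_nonneg (neg_nonpos.2 (hg (Y ω))) ha.le
  -- Markov's inequality: `f = 1` on `Y ⁻¹' F`
  have hmarkov : μ.real (Y ⁻¹' F) ≤ ∫ ω, f ω ∂μ := by
    calc μ.real (Y ⁻¹' F) ≤ μ.real {ω | 1 ≤ f ω} :=
          measureReal_mono (fun ω hω => by simp [f, hgF hω])
      _ = 1 * μ.real {ω | 1 ≤ f ω} := (one_mul _).symm
      _ ≤ ∫ ω, f ω ∂μ :=
          mul_meas_ge_le_integral_of_nonneg (ae_of_all _ fun _ => (Real.exp_pos _).le) hf_int 1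
  calc (a : EReal) * ENNReal.log (μ (Y ⁻¹' F)) + s
      ≤ ((a * Real.log (∫ ω, f ω ∂μ) : ℝ) : EReal) + ⨅ φ, (((g φ : ℝ) : EReal) + (I φ : EReal)) :=
        add_le_add (EReal.coe_mul_log_le_of_toReal_le ha (measure_ne_top μ _) hmarkov)
          (EReal.coe_le_iInf_coe_add_coe hg hgs)
    _ ≤ laplaceDefect μ Y a I g := EReal.le_coe_abs _

end Laplace

theorem ulp_implies_fw_uniform_upper_general
    {E : Type*} [MetricSpace E] [MeasurableSpace E] [BorelSpace E]
    {E0 : Type*} {Ω : Type*} [MeasurableSpace Ω] (μ : Measure Ω) [IsProbabilityMeasure μ]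
    (X : ℝ → E0 → Ω → E) (hX : ∀ ε x, Measurable (X ε x))
    (a : ℝ → ℝ) (ha_pos : ∀ ε > 0, 0 < a ε)
    (I : E0 → E → ℝ≥0∞)
    (𝒜 : Set (Set E0))
    -- Assumption A: for every A ∈ 𝒜 and s ≥ 0, ⋃_{x ∈ A} Φ_x(s) is precompact
    (hcomp : ∀ A ∈ 𝒜, ∀ s : ℝ, 0 ≤ s →
      IsCompact (closure (⋃ x ∈ A, {φ | I x φ ≤ ENNReal.ofReal s})))
    -- the uniform Laplace principle over 𝒜
    (hULP : ∀ A ∈ 𝒜, ∀ h : E →ᵇ ℝ,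
      Tendsto (fun ε => ⨆ x ∈ A,
          EReal.abs (((a ε * Real.log (∫ ω, Real.exp (-(h (X ε x ω)) / a ε) ∂μ) : ℝ) : EReal)
            + ⨅ φ, (((h φ : ℝ) : EReal) + (I x φ : EReal))))
        (𝓝[>] (0:ℝ)) (𝓝 (0 : ℝ≥0∞))) :
    -- the Freidlin-Wentzell uniform upper bound
    ∀ A ∈ 𝒜, ∀ s₀ > (0:ℝ), ∀ δ > (0:ℝ),
      Filter.limsup (fun ε =>
        ⨆ x ∈ A, ⨆ s ∈ Set.Icc (0:ℝ) s₀,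
          ((a ε : EReal) * ENNReal.log
              (μ {ω | ENNReal.ofReal δ ≤
                  EMetric.infEdist (X ε x ω) {φ | I x φ ≤ ENNReal.ofReal s}})
            + (s : EReal))) (𝓝[>] (0:ℝ)) ≤ 0 := by
  intro A hA s₀ hs₀ δ hδ
  obtain ⟨H, hHfin, hH0, hHsep⟩ :=
    (hcomp A hA s₀ hs₀.le).totallyBounded.exists_finite_separating_bcf hδ hs₀.le
  have hT : Tendsto (fun ε => ∑ g ∈ hHfin.toFinset, ⨆ x ∈ A, laplaceDefect μ (X ε x) (a ε) (I x) g)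
      (𝓝[>] 0) (𝓝 0) := by
    have hsum := tendsto_finsetSum hHfin.toFinset fun g _ => hULP A hA g
    rwa [Finset.sum_const_zero] at hsum
  refine EReal.limsup_le_zero_of_eventually_le_coe hT ?_
  filter_upwards [self_mem_nhdsWithin] with ε (hε : 0 < ε)
  refine iSup₂_le fun x hx => iSup₂_le fun s hs => ?_
  have hΦ : {φ | I x φ ≤ ENNReal.ofReal s} ⊆ closure (⋃ x ∈ A, {φ | I x φ ≤ ENNReal.ofReal s₀}) :=
    fun φ hφ => subset_closure (Set.mem_biUnion hx (hφ.trans (ENNReal.ofReal_le_ofReal hs.2)))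
  obtain ⟨g, hgH, hgΦ, hgfar⟩ := hHsep _ hΦ
  have hdefect : laplaceDefect μ (X ε x) (a ε) (I x) g ≤
      ∑ g ∈ hHfin.toFinset, ⨆ x ∈ A, laplaceDefect μ (X ε x) (a ε) (I x) g :=
    (le_iSup₂ (f := fun x _ => laplaceDefect μ (X ε x) (a ε) (I x) g) x hx).trans
      (Finset.single_le_sum (f := fun g => ⨆ x ∈ A, laplaceDefect μ (X ε x) (a ε) (I x) g)
        (fun _ _ => bot_le) (hHfin.mem_toFinset.2 hgH))
  refine (mul_log_measure_preimage_add_le_laplaceDefect (hX ε x) (ha_pos ε hε) (hH0 g hgH) hgfar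
    fun φ hφ => ?_).trans (EReal.coe_ennreal_le_coe_ennreal_iff.2 hdefect)
  rw [hgΦ hφ]
  exact hs.2

/-- Under Assumption A (precompact unions of level sets), the uniform Laplace
principle implies the Freidlin-Wentzell uniform upper bound. -/
theorem ulp_implies_fw_uniform_upper
    {E : Type*} [MetricSpace E] [PolishSpace E] [MeasurableSpace E] [BorelSpace E]
    {E0 : Type*} {Ω : Type*} [MeasurableSpace Ω] (μ : Measure Ω) [IsProbabilityMeasure μ]
    (X : ℝ → E0 → Ω → E) (hX : ∀ ε x, Measurable (X ε x))
    (a : ℝ → ℝ) (ha_pos : ∀ ε > 0, 0 < a ε)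
    (ha : Tendsto a (𝓝[>] (0:ℝ)) (𝓝 0))
    (I : E0 → E → ℝ≥0∞) (hI : ∀ x, LowerSemicontinuous (I x))
    (𝒜 : Set (Set E0))
    -- Assumption A: for every A ∈ 𝒜 and s ≥ 0, ⋃_{x ∈ A} Φ_x(s) is precompact
    (hcomp : ∀ A ∈ 𝒜, ∀ s : ℝ, 0 ≤ s →
      IsCompact (closure (⋃ x ∈ A, {φ | I x φ ≤ ENNReal.ofReal s})))
    -- the uniform Laplace principle over 𝒜
    (hULP : ∀ A ∈ 𝒜, ∀ h : E →ᵇ ℝ,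
      Tendsto (fun ε => ⨆ x ∈ A,
          EReal.abs (((a ε * Real.log (∫ ω, Real.exp (-(h (X ε x ω)) / a ε) ∂μ) : ℝ) : EReal)
            + ⨅ φ, (((h φ : ℝ) : EReal) + (I x φ : EReal))))
        (𝓝[>] (0:ℝ)) (𝓝 (0 : ℝ≥0∞))) :
    -- the Freidlin-Wentzell uniform upper bound
    ∀ A ∈ 𝒜, ∀ s₀ > (0:ℝ), ∀ δ > (0:ℝ),
      Filter.limsup (fun ε =>
        ⨆ x ∈ A, ⨆ s ∈ Set.Icc (0:ℝ) s₀,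
          ((a ε : EReal) * ENNReal.log
              (μ {ω | ENNReal.ofReal δ ≤
                  EMetric.infEdist (X ε x ω) {φ | I x φ ≤ ENNReal.ofReal s}})
            + (s : EReal))) (𝓝[>] (0:ℝ)) ≤ 0 :=
  ulp_implies_fw_uniform_upper_general μ X hX a ha_pos I 𝒜 hcomp hULP
end

section
/- The Freidlin-Wentzell uniform large deviations principle implies the equicontinuous uniform Laplace principle lower bound, with no extra assumptions: for any $A\in\mathscr{A}$ and any equibounded, equicontinuous family $L$ of continuous functions $h:\mathcal{E}\to\mathbb{R}$, $\liminf_{\epsilon\to 0}\inf_{x\in A}\inf_{h\in L}\big(a(\epsilon)\log\mathbb{E}\exp(-h(X^\epsilon_x)/a(\epsilon)) + \inf_{\varphi\in\mathcal{E}}\{h(\varphi)+I_x(\varphi)\}\big)\ge 0$. -/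
/-!
Fix `η > 0` and let `δ` be the modulus of equicontinuity of `L` for `η`. On the event
`ρ(X, φ) < δ` we have `h(X) ≤ h(φ) + η`, so
`a log 𝔼 exp(-h(X)/a) ≥ a log ℙ(ρ(X, φ) < δ) - h(φ) - η`.
If `‖h‖ ≤ M` and `inf I_x = 0`, the infimum of `h + I_x` may be taken over the sublevel set
`{I_x ≤ 2M + 1}`, where the Freidlin–Wentzell lower bound controls `a log ℙ(ρ(X, φ) < δ) + I_x(φ)`
uniformly in `x ∈ A` and `φ`. Hence the liminf is at least `-η` for every `η > 0`.
-/

open MeasureTheory Filter Topology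
open scoped ENNReal NNReal BoundedContinuousFunction

lemma EReal.nonneg_of_forall_neg_le {x : EReal} (h : ∀ η : ℝ, 0 < η → ((-η : ℝ) : EReal) ≤ x) :
    0 ≤ x := by
  refine le_of_forall_lt_imp_le_of_dense fun c hc => ?_
  obtain ⟨r, hcr, hr⟩ := EReal.exists_between_coe_real hc
  have hr : r < 0 := by exact_mod_cast hr
  exact hcr.le.trans (by simpa using h (-r) (by linarith))

lemma EReal.le_liminf_of_eventually_add_le {α : Type*} {l : Filter α} [l.NeBot]
    {g F : α → EReal} {c : EReal} (hg : 0 ≤ liminf g l) (hgF : ∀ᶠ ε in l, g ε + c ≤ F ε) :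
    c ≤ liminf F l :=
  calc c = 0 + liminf (fun _ => c) l := by rw [liminf_const, zero_add]
    _ ≤ liminf g l + liminf (fun _ => c) l := add_le_add_left hg _
    _ ≤ liminf (fun ε => g ε + c) l := EReal.le_liminf_add
    _ ≤ liminf F l := liminf_le_liminf hgF

lemma BoundedContinuousFunction.integrable_exp_neg_comp_div {Ω E : Type*} [MeasurableSpace Ω]
    [TopologicalSpace E] [MeasurableSpace E] [OpensMeasurableSpace E]
    {μ : Measure Ω} [IsFiniteMeasure μ] (h : E →ᵇ ℝ) {Y : Ω → E} (hY : Measurable Y) (a : ℝ) :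
    Integrable (fun ω => Real.exp (-h (Y ω) / a)) μ := by
  refine Integrable.of_bound
    ((h.continuous.measurable.comp hY).neg.div_const a).exp.aestronglyMeasurable
    (Real.exp (‖h‖ / |a|)) (Eventually.of_forall fun ω => ?_)
  rw [Real.norm_eq_abs, abs_of_pos (Real.exp_pos _), Real.exp_le_exp]
  calc -h (Y ω) / a ≤ |-h (Y ω) / a| := le_abs_self _
    _ = |h (Y ω)| / |a| := by rw [abs_div, abs_neg]
    _ ≤ ‖h‖ / |a| := div_le_div_of_nonneg_right (h.norm_coe_le_norm _) (abs_nonneg a)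

lemma exp_neg_div_mul_measureReal_le_integral_exp {Ω : Type*} [MeasurableSpace Ω]
    {μ : Measure Ω} [IsFiniteMeasure μ] {f : Ω → ℝ} {a c : ℝ} (ha : 0 < a)
    (hf : Integrable (fun ω => Real.exp (-f ω / a)) μ) {S : Set Ω} (hS : MeasurableSet S)
    (hfc : ∀ ω ∈ S, f ω ≤ c) :
    Real.exp (-c / a) * μ.real S ≤ ∫ ω, Real.exp (-f ω / a) ∂μ :=
  calc Real.exp (-c / a) * μ.real S ≤ ∫ ω in S, Real.exp (-f ω / a) ∂μ :=
        setIntegral_ge_of_const_le_real hS (measure_ne_top μ S)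
          (fun ω hω => Real.exp_le_exp.2 <| div_le_div_of_nonneg_right
            (neg_le_neg (hfc ω hω)) ha.le) hf.integrableOn
    _ ≤ ∫ ω, Real.exp (-f ω / a) ∂μ :=
        setIntegral_le_integral hf (Eventually.of_forall fun _ => (Real.exp_pos _).le)

lemma mul_log_measure_le_mul_log_integral_exp_add {Ω : Type*} [MeasurableSpace Ω]
    {μ : Measure Ω} [IsFiniteMeasure μ] {f : Ω → ℝ} {a c : ℝ} (ha : 0 < a)
    (hf : Integrable (fun ω => Real.exp (-f ω / a)) μ) {S : Set Ω} (hS : MeasurableSet S)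
    (hfc : ∀ ω ∈ S, f ω ≤ c) :
    (a : EReal) * ENNReal.log (μ S)
      ≤ ((a * Real.log (∫ ω, Real.exp (-f ω / a) ∂μ) : ℝ) : EReal) + c := by
  rcases eq_or_ne (μ S) 0 with hS0 | hS0
  · simp [hS0, EReal.coe_mul_bot_of_pos ha]
  have hm : 0 < μ.real S := ENNReal.toReal_pos hS0 (measure_ne_top μ S)
  have hZ := exp_neg_div_mul_measureReal_le_integral_exp ha hf hS hfc
  have hlog : -c / a + Real.log (μ.real S) ≤ Real.log (∫ ω, Real.exp (-f ω / a) ∂μ) := by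
    simpa [Real.log_mul (Real.exp_ne_zero _) hm.ne'] using
      Real.log_le_log (by positivity) hZ
  have hreal : a * Real.log (μ.real S) ≤ a * Real.log (∫ ω, Real.exp (-f ω / a) ∂μ) + c := by
    have := mul_le_mul_of_nonneg_left hlog ha.le
    rw [mul_add, mul_div_cancel₀ _ ha.ne'] at this
    linarith
  rw [ENNReal.log_pos_real hS0 (measure_ne_top μ S), ← EReal.coe_mul, ← EReal.coe_add]
  exact_mod_cast hreal

lemma BoundedContinuousFunction.iInf_add_eq_biInf_sublevel {E : Type*} [TopologicalSpace E]
    (h : E →ᵇ ℝ) {f : E → ℝ≥0∞} (hf : ⨅ φ, f φ = 0) {s : ℝ} (hs : 2 * ‖h‖ < s) :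
    ⨅ φ, ((h φ : EReal) + f φ) = ⨅ φ ∈ {ψ | f ψ ≤ ENNReal.ofReal s}, ((h φ : EReal) + f φ) := by
  refine le_antisymm (le_iInf₂ fun φ _ => iInf_le _ φ) (le_iInf fun φ => ?_)
  by_cases hφ : f φ ≤ ENNReal.ofReal s
  · exact iInf₂_le φ hφ
  obtain ⟨ψ, hψ⟩ : ∃ ψ, f ψ < ENNReal.ofReal (s - 2 * ‖h‖) :=
    iInf_lt_iff.1 (hf ▸ ENNReal.ofReal_pos.2 (by linarith))
  have hψs : f ψ ≤ ENNReal.ofReal s :=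
    hψ.le.trans (ENNReal.ofReal_le_ofReal (by linarith [norm_nonneg h]))
  have hψ' : (f ψ : EReal) < ((s - 2 * ‖h‖ : ℝ) : EReal) := by
    simpa [EReal.coe_ennreal_ofReal, max_eq_left (by linarith : 0 ≤ s - 2 * ‖h‖)] using
      EReal.coe_ennreal_lt_coe_ennreal_iff.2 hψ
  have hφ' : ((s : ℝ) : EReal) < f φ := by
    simpa [EReal.coe_ennreal_ofReal, max_eq_left (by linarith [norm_nonneg h] : 0 ≤ s)] using
      EReal.coe_ennreal_lt_coe_ennreal_iff.2 (not_le.1 hφ)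
  have hhψ : ((h ψ : ℝ) : EReal) ≤ ((‖h‖ : ℝ) : EReal) := by
    exact_mod_cast (le_abs_self _).trans (h.norm_coe_le_norm ψ)
  have hhφ : ((-‖h‖ : ℝ) : EReal) ≤ ((h φ : ℝ) : EReal) := by
    exact_mod_cast neg_le_of_abs_le (h.norm_coe_le_norm φ)
  calc ⨅ φ ∈ {ψ | f ψ ≤ ENNReal.ofReal s}, ((h φ : EReal) + f φ) ≤ (h ψ : EReal) + f ψ :=
        iInf₂_le ψ hψs
    _ ≤ ((‖h‖ + (s - 2 * ‖h‖) : ℝ) : EReal) := by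
        rw [EReal.coe_add]; exact add_le_add hhψ hψ'.le
    _ = ((-‖h‖ + s : ℝ) : EReal) := by ring_nf
    _ ≤ (h φ : EReal) + f φ := by
        rw [EReal.coe_add]; exact add_le_add hhφ hφ'.le

lemma add_neg_le_mul_log_integral_exp_add_biInf {Ω E : Type*} [MeasurableSpace Ω]
    [PseudoMetricSpace E] [MeasurableSpace E] [OpensMeasurableSpace E]
    {μ : Measure Ω} [IsFiniteMeasure μ] {Y : Ω → E} (hY : Measurable Y) (h : E →ᵇ ℝ)
    {a η δ : ℝ} (ha : 0 < a) (hδ : ∀ φ ψ : E, dist φ ψ < δ → |h φ - h ψ| < η)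
    {f : E → ℝ≥0∞} {T : Set E} {G : EReal}
    (hG : ∀ φ ∈ T, G ≤ (a : EReal) * ENNReal.log (μ {ω | dist (Y ω) φ < δ}) + f φ) :
    G + ((-η : ℝ) : EReal) ≤ ((a * Real.log (∫ ω, Real.exp (-h (Y ω) / a) ∂μ) : ℝ) : EReal)
      + ⨅ φ ∈ T, ((h φ : EReal) + f φ) := by
  set Λ : ℝ := a * Real.log (∫ ω, Real.exp (-h (Y ω) / a) ∂μ)
  suffices G + ((-η : ℝ) : EReal) - Λ ≤ ⨅ φ ∈ T, ((h φ : EReal) + f φ) by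
    rwa [EReal.sub_le_iff_le_add (.inl (EReal.coe_ne_bot Λ)) (.inl (EReal.coe_ne_top Λ)),
      add_comm _ (Λ : EReal)] at this
  refine le_iInf₂ fun φ hφ => ?_
  rw [EReal.sub_le_iff_le_add (.inl (EReal.coe_ne_bot Λ)) (.inl (EReal.coe_ne_top Λ))]
  have hball : (a : EReal) * ENNReal.log (μ {ω | dist (Y ω) φ < δ}) ≤ Λ + ((h φ + η : ℝ) : EReal) :=
    mul_log_measure_le_mul_log_integral_exp_add ha (h.integrable_exp_neg_comp_div hY a)
      (hY measurableSet_ball) fun ω hω => by linarith [(abs_lt.1 (hδ _ _ hω)).2]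
  calc G + ((-η : ℝ) : EReal)
      ≤ (a : EReal) * ENNReal.log (μ {ω | dist (Y ω) φ < δ}) + f φ + ((-η : ℝ) : EReal) :=
        add_le_add_left (hG φ hφ) _
    _ ≤ Λ + ((h φ + η : ℝ) : EReal) + f φ + ((-η : ℝ) : EReal) :=
        add_le_add_left (add_le_add_left hball _) _
    _ = (h φ : EReal) + f φ + Λ + ((η + -η : ℝ) : EReal) := by
        push_cast; ac_rfl
    _ = (h φ : EReal) + f φ + Λ := by simp

theorem fwuldp_implies_eulp_lower_general
    {E : Type*} [MetricSpace E] [MeasurableSpace E] [BorelSpace E]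
    {E0 : Type*} {Ω : Type*} [MeasurableSpace Ω] (μ : Measure Ω) [IsProbabilityMeasure μ]
    (X : ℝ → E0 → Ω → E) (hX : ∀ ε x, Measurable (X ε x))
    (a : ℝ → ℝ) (ha_pos : ∀ ε > 0, 0 < a ε)
    (I : E0 → E → ℝ≥0∞)
    (hinf : ∀ x : E0, (⨅ φ, I x φ) = 0)
    (𝒜 : Set (Set E0))
    -- FWULDP lower bound over 𝒜
    (hFWlow : ∀ A ∈ 𝒜, ∀ s₀ > (0:ℝ), ∀ δ > (0:ℝ),
      (0 : EReal) ≤ Filter.liminf (fun ε =>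
        ⨅ x ∈ A, ⨅ φ ∈ {ψ | I x ψ ≤ ENNReal.ofReal s₀},
          ((a ε : EReal) * ENNReal.log (μ {ω | dist (X ε x ω) φ < δ})
            + (I x φ : EReal))) (𝓝[>] (0:ℝ))) :
    -- the EULP lower bound: L is any equibounded, equicontinuous family
    ∀ A ∈ 𝒜, ∀ L : Set (E →ᵇ ℝ),
      (∃ M : ℝ, ∀ h ∈ L, ‖h‖ ≤ M) →
      (∀ η > (0:ℝ), ∃ δ > (0:ℝ), ∀ h ∈ L, ∀ φ ψ : E, dist φ ψ < δ → |h φ - h ψ| < η) →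
      (0 : EReal) ≤ Filter.liminf (fun ε =>
        ⨅ x ∈ A, ⨅ h ∈ L,
          (((a ε * Real.log (∫ ω, Real.exp (-(h (X ε x ω)) / a ε) ∂μ) : ℝ) : EReal)
            + ⨅ φ, (((h φ : ℝ) : EReal) + (I x φ : EReal)))) (𝓝[>] (0:ℝ)) := by
  intro A hA L ⟨M, hM⟩ hequi
  refine EReal.nonneg_of_forall_neg_le fun η hη => ?_
  obtain ⟨δ, hδ, hLδ⟩ := hequi η hη
  have hs : 0 < 2 * |M| + 1 := by positivity
  refine EReal.le_liminf_of_eventually_add_le (hFWlow A hA _ hs δ hδ) ?_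
  filter_upwards [self_mem_nhdsWithin] with ε hε
  refine le_iInf₂ fun x hx => le_iInf₂ fun h hh => ?_
  rw [h.iInf_add_eq_biInf_sublevel (hinf x) (s := 2 * |M| + 1)
    (by linarith [hM h hh, le_abs_self M])]
  exact add_neg_le_mul_log_integral_exp_add_biInf (hX ε x) h (ha_pos ε hε) (hLδ h hh)
    fun φ hφ => iInf₂_le_of_le x hx (iInf₂_le φ hφ)

/-- With no extra assumptions, the Freidlin-Wentzell uniform large deviations principle
implies the equicontinuous uniform Laplace principle lower bound. -/
theorem fwuldp_implies_eulp_lower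
    {E : Type*} [MetricSpace E] [PolishSpace E] [MeasurableSpace E] [BorelSpace E]
    {E0 : Type*} {Ω : Type*} [MeasurableSpace Ω] (μ : Measure Ω) [IsProbabilityMeasure μ]
    (X : ℝ → E0 → Ω → E) (hX : ∀ ε x, Measurable (X ε x))
    (a : ℝ → ℝ) (ha_pos : ∀ ε > 0, 0 < a ε)
    (ha : Tendsto a (𝓝[>] (0:ℝ)) (𝓝 0))
    (I : E0 → E → ℝ≥0∞) (hI : ∀ x, LowerSemicontinuous (I x))
    (hinf : ∀ x : E0, (⨅ φ, I x φ) = 0)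
    (𝒜 : Set (Set E0))
    -- FWULDP lower bound over 𝒜
    (hFWlow : ∀ A ∈ 𝒜, ∀ s₀ > (0:ℝ), ∀ δ > (0:ℝ),
      (0 : EReal) ≤ Filter.liminf (fun ε =>
        ⨅ x ∈ A, ⨅ φ ∈ {ψ | I x ψ ≤ ENNReal.ofReal s₀},
          ((a ε : EReal) * ENNReal.log (μ {ω | dist (X ε x ω) φ < δ})
            + (I x φ : EReal))) (𝓝[>] (0:ℝ)))
    -- FWULDP upper bound over 𝒜
    (hFWup : ∀ A ∈ 𝒜, ∀ s₀ > (0:ℝ), ∀ δ > (0:ℝ),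
      Filter.limsup (fun ε =>
        ⨆ x ∈ A, ⨆ s ∈ Set.Icc (0:ℝ) s₀,
          ((a ε : EReal) * ENNReal.log
              (μ {ω | ENNReal.ofReal δ ≤
                  EMetric.infEdist (X ε x ω) {φ | I x φ ≤ ENNReal.ofReal s}})
            + (s : EReal))) (𝓝[>] (0:ℝ)) ≤ 0) :
    -- the EULP lower bound: L is any equibounded, equicontinuous family
    ∀ A ∈ 𝒜, ∀ L : Set (E →ᵇ ℝ),
      (∃ M : ℝ, ∀ h ∈ L, ‖h‖ ≤ M) →
      (∀ η > (0:ℝ), ∃ δ > (0:ℝ), ∀ h ∈ L, ∀ φ ψ : E, dist φ ψ < δ → |h φ - h ψ| < η) →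
      (0 : EReal) ≤ Filter.liminf (fun ε =>
        ⨅ x ∈ A, ⨅ h ∈ L,
          (((a ε * Real.log (∫ ω, Real.exp (-(h (X ε x ω)) / a ε) ∂μ) : ℝ) : EReal)
            + ⨅ φ, (((h φ : ℝ) : EReal) + (I x φ : EReal)))) (𝓝[>] (0:ℝ)) :=
  fwuldp_implies_eulp_lower_general μ X hX a ha_pos I hinf 𝒜 hFWlow
end

section
/- The equicontinuous uniform Laplace principle implies the Freidlin-Wentzell uniform lower bound, with no extra assumptions: if for any $A\in\mathscr{A}$ and any equibounded, equicontinuous family $L$, $\lim_{\epsilon\to 0}\sup_{x\in A}\sup_{h\in L}|a(\epsilon)\log\mathbb{E}\exp(-h(X^\epsilon_x)/a(\epsilon)) + \inf_\varphi\{h(\varphi)+I_x(\varphi)\}| = 0$, then for all $A\in\mathscr{A}$, $s_0>0$, $\delta>0$, $\liminf_{\epsilon\to 0}\inf_{x\in A}\inf_{\varphi\in\Phi_x(s_0)}\big(a(\epsilon)\log\mathbb{P}(\rho(X^\epsilon_x,\varphi)<\delta)+I_x(\varphi)\big)\ge 0$. -/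
open MeasureTheory Filter Topology
open scoped ENNReal NNReal BoundedContinuousFunction

/-!
Fix `η > 0` and test the Laplace principle against the functions
`h_φ = min (K * dist · φ) M` with `M = s₀ + η` and `K = M / δ`: they vanish at `φ`, equal `M`
outside the ball `B(φ, δ)` and are uniformly bounded and `K`-Lipschitz, so the family is admissible.
Since `inf (h_φ + I_x) ≤ I_x φ`, the Laplace principle gives, uniformly in `x` and `φ`,
`E exp (-h_φ(X)/a) ≥ exp (-(I_x φ + η/2)/a)`, while
`E exp (-h_φ(X)/a) ≤ P(ρ(X, φ) < δ) + exp (-M/a)`.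
Once `a log 2 ≤ η/2` the last term is at most half of the lower bound, which leaves
`a log P(ρ(X, φ) < δ) + I_x φ ≥ -η` for all small `ε`.
-/

section Cutoff

variable {E : Type*} [PseudoMetricSpace E]

noncomputable def distCutoff (K : ℝ≥0) (M : ℝ) (φ : E) : E →ᵇ ℝ :=
  BoundedContinuousFunction.ofNormedAddCommGroup (fun y => min (K * dist y φ) M)
    (by fun_prop) |M| fun y => by
      rw [Real.norm_eq_abs, abs_le]
      exact ⟨le_min ((neg_nonpos.2 (abs_nonneg M)).trans (by positivity)) (neg_abs_le M),
        (min_le_right _ _).trans (le_abs_self M)⟩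

variable (K : ℝ≥0) (M : ℝ) (φ : E)

lemma distCutoff_apply (y : E) : distCutoff K M φ y = min (K * dist y φ) M := rfl

lemma norm_distCutoff_le : ‖distCutoff K M φ‖ ≤ |M| :=
  BoundedContinuousFunction.norm_ofNormedAddCommGroup_le _ (abs_nonneg M) _

lemma distCutoff_self (hM : 0 ≤ M) : distCutoff K M φ φ = 0 := by
  simp [distCutoff_apply, hM]

lemma distCutoff_nonneg (hM : 0 ≤ M) (y : E) : 0 ≤ distCutoff K M φ y :=
  le_min (by positivity) hM

lemma distCutoff_of_le {y : E} (hy : M ≤ K * dist y φ) : distCutoff K M φ y = M :=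
  min_eq_right hy

lemma distCutoff_toNNReal_div_of_le (hM : 0 ≤ M) {δ : ℝ} (hδ : 0 < δ) {y : E}
    (hy : δ ≤ dist y φ) : distCutoff (M / δ).toNNReal M φ y = M := by
  refine distCutoff_of_le _ _ _ ?_
  rw [Real.coe_toNNReal _ (by positivity), div_mul_eq_mul_div, le_div_iff₀ hδ]
  exact mul_le_mul_of_nonneg_left hy hM

lemma lipschitzWith_distCutoff : LipschitzWith K (distCutoff K M φ) := by
  show LipschitzWith K fun y => min (K * dist y φ) M
  simpa using ((lipschitzWith_smul (K : ℝ)).comp (LipschitzWith.dist_left φ)).min_const M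

lemma uniformEquicontinuous_distCutoff :
    UniformEquicontinuous fun φ : E => ⇑(distCutoff K M φ) :=
  LipschitzWith.uniformEquicontinuous _ K (lipschitzWith_distCutoff K M)

end Cutoff

lemma EReal.neg_sub_lt_of_abs_add_lt {r J η : ℝ} {m : EReal} (hm : m ≤ J)
    (h : EReal.abs (r + m) < ENNReal.ofReal η) : -J - η < r := by
  induction m using EReal.rec with
  | bot => simp at h
  | top => simp at hm
  | coe m =>
    rw [← EReal.coe_add, EReal.abs_def,
      ENNReal.ofReal_lt_ofReal_iff_of_nonneg (abs_nonneg _)] at h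
    have := EReal.coe_le_coe_iff.1 hm
    linarith [(abs_lt.1 h).1]

lemma EReal.zero_le_liminf_of_forall_eventually {α : Type*} {l : Filter α} {f : α → EReal}
    (h : ∀ η > (0 : ℝ), ∀ᶠ x in l, ((-η : ℝ) : EReal) ≤ f x) : 0 ≤ liminf f l :=
  EReal.ge_of_forall_gt_iff_ge.1 fun z hz =>
    le_liminf_of_le (by isBoundedDefault) (by simpa using h (-z) (by simpa using hz))

lemma pos_and_le_mul_log_of_exp_le_add_exp {a c η p : ℝ} (ha : 0 < a)
    (hη : a * Real.log 2 ≤ η) (h : Real.exp (c / a) ≤ p + Real.exp ((c - η) / a)) :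
    0 < p ∧ c - η ≤ a * Real.log p := by
  have hhalf : Real.exp ((c - η) / a) ≤ Real.exp (c / a) / 2 := by
    rw [sub_div, Real.exp_sub, div_le_div_iff_of_pos_left (Real.exp_pos _) (Real.exp_pos _)
      two_pos, ← Real.exp_log two_pos, Real.exp_le_exp, le_div_iff₀ ha]
    linarith
  have hp : Real.exp (c / a) / 2 ≤ p := by linarith
  have hp0 : 0 < p := lt_of_lt_of_le (by positivity) hp
  refine ⟨hp0, ?_⟩
  have hlog := Real.log_le_log (by positivity) hp
  rw [Real.log_div (Real.exp_ne_zero _) two_ne_zero, Real.log_exp, sub_le_iff_le_add,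
    div_le_iff₀ ha] at hlog
  nlinarith

lemma integral_le_measureReal_add {Ω : Type*} [MeasurableSpace Ω] {μ : Measure Ω}
    [IsProbabilityMeasure μ] {f : Ω → ℝ} (hf : Integrable f μ) {S : Set Ω}
    (hS : MeasurableSet S) {c : ℝ} (hc : 0 ≤ c) (hfS : ∀ ω ∈ S, f ω ≤ 1)
    (hfSc : ∀ ω ∉ S, f ω ≤ c) : ∫ ω, f ω ∂μ ≤ μ.real S + c := by
  have hind : Integrable (S.indicator 1) μ := (integrable_const (1 : ℝ)).indicator hS
  calc ∫ ω, f ω ∂μ ≤ ∫ ω, (S.indicator 1 ω + c) ∂μ := by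
        refine integral_mono hf (hind.add (integrable_const c)) fun ω => ?_
        by_cases hω : ω ∈ S
        · simp only [Set.indicator_of_mem hω, Pi.one_apply]
          linarith [hfS ω hω]
        · simpa [Set.indicator_of_notMem hω] using hfSc ω hω
    _ = μ.real S + c := by
        rw [integral_add hind (integrable_const c), integral_indicator_one hS]
        simp

lemma neg_le_mul_log_measure_dist_lt_add {E Ω : Type*} [PseudoMetricSpace E] [MeasurableSpace E]
    [OpensMeasurableSpace E] [MeasurableSpace Ω] {μ : Measure Ω} [IsProbabilityMeasure μ]
    {Y : Ω → E} (hY : Measurable Y) {F : E → ℝ≥0∞} {h : E →ᵇ ℝ} {φ : E} {a δ η η' : ℝ}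
    (ha : 0 < a) (ha' : a * Real.log 2 ≤ η') (hF : F φ ≠ ∞) (h_nonneg : ∀ y, 0 ≤ h y)
    (hφ : h φ = 0) (h_far : ∀ y, δ ≤ dist y φ → (F φ).toReal + η + η' ≤ h y)
    (hlap : EReal.abs (((a * Real.log (∫ ω, Real.exp (-(h (Y ω)) / a) ∂μ) : ℝ) : EReal)
      + ⨅ ψ, (((h ψ : ℝ) : EReal) + (F ψ : EReal))) < ENNReal.ofReal η) :
    ((-(η + η') : ℝ) : EReal) ≤ (a : EReal) * ENNReal.log (μ {ω | dist (Y ω) φ < δ}) + F φ := by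
  set J := (F φ).toReal
  set T := ∫ ω, Real.exp (-(h (Y ω)) / a) ∂μ
  set S := {ω | dist (Y ω) φ < δ}
  have hFJ : (F φ : EReal) = J := (EReal.coe_ennreal_toReal hF).symm
  have hinf : ⨅ ψ, (((h ψ : ℝ) : EReal) + (F ψ : EReal)) ≤ J :=
    (iInf_le _ φ).trans_eq (by rw [hφ, hFJ, EReal.coe_zero, zero_add])
  have hlogT : -J - η < a * Real.log T := EReal.neg_sub_lt_of_abs_add_lt hinf hlap
  have h_le_one (ω : Ω) : Real.exp (-(h (Y ω)) / a) ≤ 1 :=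
    Real.exp_le_one_iff.2 (div_nonpos_of_nonpos_of_nonneg (neg_nonpos.2 (h_nonneg _)) ha.le)
  have hint : Integrable (fun ω => Real.exp (-(h (Y ω)) / a)) μ :=
    .of_bound ((h.continuous.measurable.comp hY).neg.div_const a).exp.aestronglyMeasurable 1
      (ae_of_all _ fun ω => (Real.norm_of_nonneg (Real.exp_pos _).le).trans_le (h_le_one ω))
  have hT : Real.exp ((-J - η) / a) ≤ T := by
    rw [← Real.exp_log (show 0 < T from integral_exp_pos hint), Real.exp_le_exp, div_le_iff₀ ha]
    linarith
  have hTS : T ≤ μ.real S + Real.exp ((-J - η - η') / a) := by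
    refine integral_le_measureReal_add hint (measurableSet_lt (by fun_prop) measurable_const)
      (Real.exp_pos _).le (fun ω _ => h_le_one ω) fun ω hω => ?_
    rw [Real.exp_le_exp]
    gcongr
    linarith [h_far _ (not_lt.1 hω)]
  obtain ⟨hS, hlogS⟩ := pos_and_le_mul_log_of_exp_le_add_exp ha ha' (hT.trans hTS)
  rw [measureReal_def] at hS hlogS
  rw [ENNReal.log_pos_real' hS, hFJ, ← EReal.coe_mul, ← EReal.coe_add, EReal.coe_le_coe_iff]
  linarith

theorem eulp_implies_fw_uniform_lower_general
    {E : Type*} [MetricSpace E] [MeasurableSpace E] [BorelSpace E]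
    {E0 : Type*} {Ω : Type*} [MeasurableSpace Ω] (μ : Measure Ω) [IsProbabilityMeasure μ]
    (X : ℝ → E0 → Ω → E) (hX : ∀ ε x, Measurable (X ε x))
    (a : ℝ → ℝ) (ha_pos : ∀ ε > 0, 0 < a ε)
    (ha : Tendsto a (𝓝[>] (0:ℝ)) (𝓝 0))
    (I : E0 → E → ℝ≥0∞)
    (𝒜 : Set (Set E0))
    -- the equicontinuous uniform Laplace principle over 𝒜
    (hEULP : ∀ A ∈ 𝒜, ∀ L : Set (E →ᵇ ℝ),
      (∃ M : ℝ, ∀ h ∈ L, ‖h‖ ≤ M) →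
      (∀ η > (0:ℝ), ∃ δ > (0:ℝ), ∀ h ∈ L, ∀ φ ψ : E, dist φ ψ < δ → |h φ - h ψ| < η) →
      Tendsto (fun ε => ⨆ x ∈ A, ⨆ h ∈ L,
          EReal.abs (((a ε * Real.log (∫ ω, Real.exp (-(h (X ε x ω)) / a ε) ∂μ) : ℝ) : EReal)
            + ⨅ φ, (((h φ : ℝ) : EReal) + (I x φ : EReal))))
        (𝓝[>] (0:ℝ)) (𝓝 (0 : ℝ≥0∞))) :
    -- the Freidlin-Wentzell uniform lower bound
    ∀ A ∈ 𝒜, ∀ s₀ > (0:ℝ), ∀ δ > (0:ℝ),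
      (0 : EReal) ≤ Filter.liminf (fun ε =>
        ⨅ x ∈ A, ⨅ φ ∈ {ψ | I x ψ ≤ ENNReal.ofReal s₀},
          ((a ε : EReal) * ENNReal.log (μ {ω | dist (X ε x ω) φ < δ})
            + (I x φ : EReal))) (𝓝[>] (0:ℝ)) := by
  intro A hA s₀ hs₀ δ hδ
  refine EReal.zero_le_liminf_of_forall_eventually fun η hη => ?_
  set M := s₀ + η
  set K := (M / δ).toNNReal
  have hM : 0 ≤ M := by positivity
  have hequi : ∀ ι > (0:ℝ), ∃ δ' > (0:ℝ), ∀ h ∈ Set.range (distCutoff (E := E) K M),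
      ∀ y z : E, dist y z < δ' → |h y - h z| < ι := by
    intro ι hι
    obtain ⟨δ', hδ', hF⟩ :=
      Metric.uniformEquicontinuous_iff.1 (uniformEquicontinuous_distCutoff (E := E) K M) ι hι
    exact ⟨δ', hδ', by rintro _ ⟨φ, rfl⟩ y z hyz; exact hF y z hyz φ⟩
  have hlap := hEULP A hA _ ⟨|M|, by rintro _ ⟨φ, rfl⟩; exact norm_distCutoff_le K M φ⟩ hequi
  filter_upwards [self_mem_nhdsWithin, ha.eventually_lt_const (div_pos (half_pos hη)
    (Real.log_pos one_lt_two)), hlap.eventually_lt_const (ENNReal.ofReal_pos.2 (half_pos hη))]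
    with ε hε hε_small hε_lap
  refine le_iInf₂ fun x hx => le_iInf₂ fun φ (hφ : I x φ ≤ ENNReal.ofReal s₀) => ?_
  have hJ : (I x φ).toReal ≤ s₀ := ENNReal.toReal_le_of_le_ofReal hs₀.le hφ
  have h_far (y : E) (hy : δ ≤ dist y φ) :
      (I x φ).toReal + η / 2 + η / 2 ≤ distCutoff K M φ y := by
    rw [distCutoff_toNNReal_div_of_le M φ hM hδ hy, add_assoc, add_halves]
    linarith
  have hlap_φ := lt_of_le_of_lt (by
    exact le_iSup₂_of_le x hx (le_iSup₂_of_le _ (Set.mem_range_self φ) le_rfl)) hε_lap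
  have := neg_le_mul_log_measure_dist_lt_add (hX ε x) (ha_pos ε hε)
    ((lt_div_iff₀ (Real.log_pos one_lt_two)).1 hε_small).le
    (ne_top_of_le_ne_top ENNReal.ofReal_ne_top hφ) (distCutoff_nonneg K M φ hM)
    (distCutoff_self K M φ hM) h_far hlap_φ
  rwa [add_halves] at this

/-- With no extra assumptions, the equicontinuous uniform Laplace principle implies
the Freidlin-Wentzell uniform lower bound. -/
theorem eulp_implies_fw_uniform_lower
    {E : Type*} [MetricSpace E] [PolishSpace E] [MeasurableSpace E] [BorelSpace E]
    {E0 : Type*} {Ω : Type*} [MeasurableSpace Ω] (μ : Measure Ω) [IsProbabilityMeasure μ]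
    (X : ℝ → E0 → Ω → E) (hX : ∀ ε x, Measurable (X ε x))
    (a : ℝ → ℝ) (ha_pos : ∀ ε > 0, 0 < a ε)
    (ha : Tendsto a (𝓝[>] (0:ℝ)) (𝓝 0))
    (I : E0 → E → ℝ≥0∞) (hI : ∀ x, LowerSemicontinuous (I x))
    (𝒜 : Set (Set E0))
    -- the equicontinuous uniform Laplace principle over 𝒜
    (hEULP : ∀ A ∈ 𝒜, ∀ L : Set (E →ᵇ ℝ),
      (∃ M : ℝ, ∀ h ∈ L, ‖h‖ ≤ M) →
      (∀ η > (0:ℝ), ∃ δ > (0:ℝ), ∀ h ∈ L, ∀ φ ψ : E, dist φ ψ < δ → |h φ - h ψ| < η) →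
      Tendsto (fun ε => ⨆ x ∈ A, ⨆ h ∈ L,
          EReal.abs (((a ε * Real.log (∫ ω, Real.exp (-(h (X ε x ω)) / a ε) ∂μ) : ℝ) : EReal)
            + ⨅ φ, (((h φ : ℝ) : EReal) + (I x φ : EReal))))
        (𝓝[>] (0:ℝ)) (𝓝 (0 : ℝ≥0∞))) :
    -- the Freidlin-Wentzell uniform lower bound
    ∀ A ∈ 𝒜, ∀ s₀ > (0:ℝ), ∀ δ > (0:ℝ),
      (0 : EReal) ≤ Filter.liminf (fun ε =>
        ⨅ x ∈ A, ⨅ φ ∈ {ψ | I x ψ ≤ ENNReal.ofReal s₀},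
          ((a ε : EReal) * ENNReal.log (μ {ω | dist (X ε x ω) φ < δ})
            + (I x φ : EReal))) (𝓝[>] (0:ℝ)) :=
  eulp_implies_fw_uniform_lower_general μ X hX a ha_pos ha I 𝒜 hEULP
end

section
/- Under Assumption B (($\mathcal{E}_0,\rho_0$) Polish, $\mathscr{A}$ the compact subsets of $\mathcal{E}_0$, each $I_x$ a good rate function, and $x_n\to x$ implies $\lambda(\Phi_{x_n}(s),\Phi_x(s))\to 0$ in Hausdorff metric for each $s\ge 0$), if $\{X^\epsilon_x\}$ satisfies the FWULDP over $\mathscr{A}$, then the Dembo-Zeitouni uniform upper bound holds: for every compact $A\subset\mathcal{E}_0$ and closed $F\subset\mathcal{E}$, $\limsup_{\epsilon\to 0}\sup_{x\in A} a(\epsilon)\log\mathbb{P}(X^\epsilon_x\in F) \le -\inf_{x\in A}\inf_{\varphi\in F} I_x(\varphi)$. -/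
/-!
For `s < inf_{x ∈ A} inf_F I_x` the level sets `Φ_x(s)` are disjoint from `F`; since each is compact
and they vary continuously in the Hausdorff metric over the compact set `A`, they stay a uniform
distance `δ > 0` away from `F`. Hence `{X^ε_x ∈ F} ⊆ {dist(X^ε_x, Φ_x(s)) ≥ δ}`, and the FWULDP upper
bound gives `limsup a(ε) log P(X^ε_x ∈ F) ≤ -s` uniformly on `A`. Letting `s` increase to the
infimum yields the claim.
-/

open MeasureTheory Filter Topology Metric
open scoped ENNReal

theorem IsCompact.exists_pos_forall_ofReal_le_infEDist {E0 E : Type*} [TopologicalSpace E0]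
    [PseudoEMetricSpace E] {Φ : E0 → Set E} {A : Set E0} {F : Set E} (hA : IsCompact A)
    (hΦ : ∀ x ∈ A, IsCompact (Φ x)) (hF : IsClosed F) (hdisj : ∀ x ∈ A, Disjoint (Φ x) F)
    (hcont : ∀ x₀ ∈ A, Tendsto (fun x => hausdorffEDist (Φ x) (Φ x₀)) (𝓝 x₀) (𝓝 0)) :
    ∃ δ > (0 : ℝ), ∀ x ∈ A, ∀ φ ∈ F, ENNReal.ofReal δ ≤ infEDist φ (Φ x) := by
  suffices h : ∀ᶠ δ in 𝓝 (0 : ℝ), ∀ x ∈ A, ∀ φ ∈ F, ENNReal.ofReal δ ≤ infEDist φ (Φ x) from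
    ((h.filter_mono (nhdsWithin_le_nhds (s := Set.Ioi 0))).and self_mem_nhdsWithin).exists.imp
      fun _ h => ⟨h.2, h.1⟩
  refine hA.eventually_forall_of_forall_eventually fun x₀ hx₀ => ?_
  obtain ⟨r, hr, hsep⟩ := exists_pos_forall_lt_edist (hΦ x₀ hx₀) hF (hdisj x₀ hx₀)
  have hr2 : (0 : ℝ≥0∞) < r / 2 := ENNReal.half_pos (by exact_mod_cast hr.ne')
  have hδ : ∀ᶠ δ in 𝓝 (0 : ℝ), ENNReal.ofReal δ < r / 2 :=
    ENNReal.continuous_ofReal.continuousAt.eventually_lt continuousAt_const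
      (by rwa [ENNReal.ofReal_zero])
  rw [nhds_prod_eq]
  filter_upwards [hδ.prod_mk ((hcont x₀ hx₀).eventually (gt_mem_nhds hr2))]
    with ⟨δ, x⟩ ⟨hδ, hH⟩ φ hφ
  by_contra! hlt
  have hr_le : (r : ℝ≥0∞) ≤ infEDist φ (Φ x₀) :=
    le_infEDist.2 fun ψ hψ => by simpa [edist_comm] using (hsep ψ hψ φ hφ).le
  refine (ENNReal.add_halves (r : ℝ≥0∞)).not_gt ?_
  calc (r : ℝ≥0∞) ≤ infEDist φ (Φ x) + hausdorffEDist (Φ x) (Φ x₀) :=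
        hr_le.trans infEDist_le_infEDist_add_hausdorffEDist
    _ < r / 2 + r / 2 := ENNReal.add_lt_add (hlt.trans hδ) hH

theorem EReal.limsup_le_neg_of_le_sub {α : Type*} {l : Filter α} [l.NeBot] {f g : α → EReal}
    {s : ℝ} (hfg : ∀ᶠ i in l, f i ≤ g i - s) (hg : limsup g l ≤ 0) : limsup f l ≤ -s :=
  calc limsup f l ≤ limsup (g + fun _ => ((-s : ℝ) : EReal)) l :=
        limsup_le_limsup (hfg.mono fun _ h => by simpa [sub_eq_add_neg] using h)
    _ ≤ limsup g l + limsup (fun _ => ((-s : ℝ) : EReal)) l := by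
        refine EReal.limsup_add_le ?_ ?_ <;> right <;> simp
    _ ≤ -s := by simpa using add_le_add_left hg ((-s : ℝ) : EReal)

theorem EReal.le_neg_coe_of_forall_le_neg {y : EReal} {L : ℝ≥0∞} (h₀ : y ≤ 0)
    (h : ∀ s : ℝ, 0 < s → ENNReal.ofReal s < L → y ≤ -s) : y ≤ -(L : EReal) := by
  by_contra! hy
  obtain ⟨r, hLr, hry⟩ := EReal.exists_between_coe_real hy
  have hr : r < 0 := by exact_mod_cast hry.trans_le h₀
  have hrL : ENNReal.ofReal (-r) < L := by
    rw [← EReal.coe_ennreal_lt_coe_ennreal_iff, EReal.coe_ennreal_ofReal, max_eq_left (by linarith)]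
    exact_mod_cast EReal.neg_lt_comm.mp hLr
  exact (h (-r) (by linarith) hrL).not_gt (by simpa using hry)

theorem MeasureTheory.coe_mul_log_measure_mono {Ω : Type*} [MeasurableSpace Ω] (μ : Measure Ω)
    {a : ℝ} (ha : 0 ≤ a) {S T : Set Ω} (hST : S ⊆ T) :
    (a : EReal) * ENNReal.log (μ S) ≤ a * ENNReal.log (μ T) :=
  mul_le_mul_of_nonneg_left (ENNReal.log_monotone (measure_mono hST)) (by exact_mod_cast ha)

theorem MeasureTheory.coe_mul_log_measure_nonpos {Ω : Type*} [MeasurableSpace Ω]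
    (μ : Measure Ω) [IsProbabilityMeasure μ] {a : ℝ} (ha : 0 ≤ a) (S : Set Ω) :
    (a : EReal) * ENNReal.log (μ S) ≤ 0 := by
  simpa using coe_mul_log_measure_mono μ ha (Set.subset_univ S)

theorem fwuldp_implies_dz_uniform_upper_general
    {E : Type*} [MetricSpace E]
    {E0 : Type*} [MetricSpace E0]
    {Ω : Type*} [MeasurableSpace Ω] (μ : Measure Ω) [IsProbabilityMeasure μ]
    (X : ℝ → E0 → Ω → E)
    (a : ℝ → ℝ) (ha_pos : ∀ ε > 0, 0 < a ε)
    (I : E0 → E → ℝ≥0∞)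
    -- each I x is a good rate function
    (hgood : ∀ x : E0, ∀ s : ℝ, IsCompact {φ | I x φ ≤ ENNReal.ofReal s})
    -- level sets are continuous in the Hausdorff metric
    (hHaus : ∀ s : ℝ, 0 ≤ s → ∀ (x : ℕ → E0) (x₀ : E0), Tendsto x atTop (𝓝 x₀) →
      Tendsto (fun n => EMetric.hausdorffEdist
          {φ | I (x n) φ ≤ ENNReal.ofReal s} {φ | I x₀ φ ≤ ENNReal.ofReal s})
        atTop (𝓝 (0 : ℝ≥0∞)))
    -- FWULDP upper bound over compact subsets of E0
    (hFWup : ∀ A : Set E0, IsCompact A → ∀ s₀ > (0:ℝ), ∀ δ > (0:ℝ),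
      Filter.limsup (fun ε =>
        ⨆ x ∈ A, ⨆ s ∈ Set.Icc (0:ℝ) s₀,
          ((a ε : EReal) * ENNReal.log
              (μ {ω | ENNReal.ofReal δ ≤
                  EMetric.infEdist (X ε x ω) {φ | I x φ ≤ ENNReal.ofReal s}})
            + (s : EReal))) (𝓝[>] (0:ℝ)) ≤ 0) :
    -- Dembo-Zeitouni uniform upper bound
    ∀ A : Set E0, IsCompact A → ∀ F : Set E, IsClosed F →
      Filter.limsup (fun ε => ⨆ x ∈ A,
          (a ε : EReal) * ENNReal.log (μ (X ε x ⁻¹' F))) (𝓝[>] (0:ℝ))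
        ≤ -((⨅ x ∈ A, ⨅ φ ∈ F, I x φ : ℝ≥0∞) : EReal) := by
  intro A hA F hF
  refine EReal.le_neg_coe_of_forall_le_neg ?_ fun s hs hsL => ?_
  · refine limsup_le_of_le (by isBoundedDefault) (eventually_nhdsWithin_of_forall fun ε hε => ?_)
    exact iSup₂_le fun x _ => coe_mul_log_measure_nonpos μ (ha_pos ε hε).le _
  have hdisj : ∀ x ∈ A, Disjoint {φ | I x φ ≤ ENNReal.ofReal s} F := fun x hx =>
    Set.disjoint_left.2 fun φ hφ hφF =>
      hφ.not_gt (hsL.trans_le (iInf₂_le_of_le x hx (iInf₂_le φ hφF)))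
  obtain ⟨δ, hδ, hsep⟩ := hA.exists_pos_forall_ofReal_le_infEDist (fun x _ => hgood x s) hF hdisj
    fun x₀ _ => tendsto_nhds_iff_seq_tendsto.2 fun x hx => hHaus s hs.le x x₀ hx
  refine EReal.limsup_le_neg_of_le_sub (eventually_nhdsWithin_of_forall fun ε hε => ?_)
    (hFWup A hA s hs δ hδ)
  refine iSup₂_le fun x hx => (EReal.le_sub_iff_add_le (.inl (EReal.coe_ne_bot s))
    (.inl (EReal.coe_ne_top s))).2 (le_iSup₂_of_le x hx (le_iSup₂_of_le s ⟨hs.le, le_rfl⟩ ?_))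
  exact add_le_add_left
    (coe_mul_log_measure_mono μ (ha_pos ε hε).le fun ω hω => hsep x hx (X ε x ω) hω) _

/-- Under Assumption B (E₀ Polish, 𝒜 the compact subsets, each Iₓ a good rate function,
and level sets continuous in the Hausdorff metric), the FWULDP over compact sets implies
the Dembo-Zeitouni uniform upper bound. -/
theorem fwuldp_implies_dz_uniform_upper
    {E : Type*} [MetricSpace E] [PolishSpace E] [MeasurableSpace E] [BorelSpace E]
    {E0 : Type*} [MetricSpace E0] [PolishSpace E0]
    {Ω : Type*} [MeasurableSpace Ω] (μ : Measure Ω) [IsProbabilityMeasure μ]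
    (X : ℝ → E0 → Ω → E) (hX : ∀ ε x, Measurable (X ε x))
    (a : ℝ → ℝ) (ha_pos : ∀ ε > 0, 0 < a ε)
    (ha : Tendsto a (𝓝[>] (0:ℝ)) (𝓝 0))
    (I : E0 → E → ℝ≥0∞) (hI : ∀ x, LowerSemicontinuous (I x))
    -- each I x is a good rate function
    (hgood : ∀ x : E0, ∀ s : ℝ, IsCompact {φ | I x φ ≤ ENNReal.ofReal s})
    -- level sets are continuous in the Hausdorff metric
    (hHaus : ∀ s : ℝ, 0 ≤ s → ∀ (x : ℕ → E0) (x₀ : E0), Tendsto x atTop (𝓝 x₀) →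
      Tendsto (fun n => EMetric.hausdorffEdist
          {φ | I (x n) φ ≤ ENNReal.ofReal s} {φ | I x₀ φ ≤ ENNReal.ofReal s})
        atTop (𝓝 (0 : ℝ≥0∞)))
    -- FWULDP lower bound over compact subsets of E0
    (hFWlow : ∀ A : Set E0, IsCompact A → ∀ s₀ > (0:ℝ), ∀ δ > (0:ℝ),
      (0 : EReal) ≤ Filter.liminf (fun ε =>
        ⨅ x ∈ A, ⨅ φ ∈ {ψ | I x ψ ≤ ENNReal.ofReal s₀},
          ((a ε : EReal) * ENNReal.log (μ {ω | dist (X ε x ω) φ < δ})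
            + (I x φ : EReal))) (𝓝[>] (0:ℝ)))
    -- FWULDP upper bound over compact subsets of E0
    (hFWup : ∀ A : Set E0, IsCompact A → ∀ s₀ > (0:ℝ), ∀ δ > (0:ℝ),
      Filter.limsup (fun ε =>
        ⨆ x ∈ A, ⨆ s ∈ Set.Icc (0:ℝ) s₀,
          ((a ε : EReal) * ENNReal.log
              (μ {ω | ENNReal.ofReal δ ≤
                  EMetric.infEdist (X ε x ω) {φ | I x φ ≤ ENNReal.ofReal s}})
            + (s : EReal))) (𝓝[>] (0:ℝ)) ≤ 0) :
    -- Dembo-Zeitouni uniform upper bound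
    ∀ A : Set E0, IsCompact A → ∀ F : Set E, IsClosed F →
      Filter.limsup (fun ε => ⨆ x ∈ A,
          (a ε : EReal) * ENNReal.log (μ (X ε x ⁻¹' F))) (𝓝[>] (0:ℝ))
        ≤ -((⨅ x ∈ A, ⨅ φ ∈ F, I x φ : ℝ≥0∞) : EReal) :=
  fwuldp_implies_dz_uniform_upper_general μ X a ha_pos I hgood hHaus hFWup
end

section
/- Under Assumption B, if $\{X^\epsilon_x\}$ satisfies the FWULDP over compact subsets of $\mathcal{E}_0$, then the Dembo-Zeitouni uniform lower bound holds: for every compact $A\subset\mathcal{E}_0$ and open $G\subset\mathcal{E}$, $\liminf_{\epsilon\to 0}\inf_{x\in A} a(\epsilon)\log\mathbb{P}(X^\epsilon_x\in G) \ge -\sup_{x\in A}\inf_{\varphi\in G} I_x(\varphi)$. -/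
open MeasureTheory Filter Topology
open scoped ENNReal NNReal

/-!
A point `φ₀ ∈ G` with `I x₀ φ₀ < s₀` survives, by Hausdorff continuity of the level sets, as a
point `φ` of level `≤ s₀` for every `x` near `x₀`, still with a ball around it inside `G`;
compactness of `A` makes the radius `δ` of that ball uniform in `x ∈ A`. The FWULDP lower bound
at level `s₀` and radius `δ` then bounds `a ε · log ℙ(Xᵉₓ ∈ G)` from below by `-s₀ - η`
uniformly on `A` for small `ε`, and `s₀ ↓ sup_A inf_G Iₓ`, `η ↓ 0` gives the claim.
-/

theorem IsCompact.exists_pos_forall_of_eventually {X : Type*} [TopologicalSpace X] {A : Set X}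
    (hA : IsCompact A) {P : ℝ → X → Prop} (hP : ∀ ⦃δ' δ x⦄, δ' ≤ δ → P δ x → P δ' x)
    (hloc : ∀ x ∈ A, ∃ δ > 0, ∀ᶠ y in 𝓝 x, P δ y) : ∃ δ > 0, ∀ x ∈ A, P δ x := by
  refine hA.induction_on (p := fun s => ∃ δ > 0, ∀ x ∈ s, P δ x) ⟨1, one_pos, by simp⟩
    (fun s t hst ⟨δ, hδ, ht⟩ => ⟨δ, hδ, fun x hx => ht x (hst hx)⟩) ?_ ?_
  · rintro s t ⟨δ₁, hδ₁, hs⟩ ⟨δ₂, hδ₂, ht⟩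
    refine ⟨min δ₁ δ₂, lt_min hδ₁ hδ₂, ?_⟩
    rintro x (hx | hx)
    exacts [hP (min_le_left _ _) (hs x hx), hP (min_le_right _ _) (ht x hx)]
  · intro x hx
    obtain ⟨δ, hδ, hev⟩ := hloc x hx
    exact ⟨_, mem_nhdsWithin_of_mem_nhds hev, δ, hδ, fun y hy => hy⟩

theorem eventually_exists_ball_subset_of_tendsto_hausdorffEDist {ι E : Type*}
    [PseudoMetricSpace E] {l : Filter ι} {L : ι → Set E} {L₀ G : Set E} {φ₀ : E} {δ : ℝ}
    (hL : Tendsto (fun i => Metric.hausdorffEDist (L i) L₀) l (𝓝 0)) (hφ₀ : φ₀ ∈ L₀)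
    (hδ : 0 < δ) (hG : Metric.ball φ₀ δ ⊆ G) :
    ∀ᶠ i in l, ∃ φ ∈ L i, Metric.ball φ (δ / 2) ⊆ G := by
  filter_upwards [hL (Iio_mem_nhds (ENNReal.ofReal_pos.2 (half_pos hδ)))] with i hi
  have hclose : Metric.infEDist φ₀ (L i) < ENNReal.ofReal (δ / 2) :=
    (Metric.infEDist_le_hausdorffEDist_of_mem hφ₀).trans_lt
      (by rwa [Metric.hausdorffEDist_comm])
  obtain ⟨φ, hφ, hdist⟩ := Metric.infEDist_lt_iff.1 hclose
  refine ⟨φ, hφ, (Metric.ball_subset_ball' ?_).trans hG⟩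
  rw [dist_comm]
  linarith [edist_lt_ofReal.1 hdist]

theorem exists_pos_forall_exists_ball_subset {E E₀ : Type*} [PseudoMetricSpace E]
    [TopologicalSpace E₀] (I : E₀ → E → ℝ≥0∞)
    (hI : ∀ s : ℝ, 0 ≤ s → ∀ x₀, Tendsto (fun x => Metric.hausdorffEDist
      {φ | I x φ ≤ ENNReal.ofReal s} {φ | I x₀ φ ≤ ENNReal.ofReal s}) (𝓝 x₀) (𝓝 0))
    {A : Set E₀} (hA : IsCompact A) {G : Set E} (hG : IsOpen G) {s₀ : ℝ}
    (hAG : ∀ x ∈ A, ∃ φ ∈ G, I x φ < ENNReal.ofReal s₀) :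
    ∃ δ > 0, ∀ x ∈ A, ∃ φ, I x φ ≤ ENNReal.ofReal s₀ ∧ Metric.ball φ δ ⊆ G := by
  refine hA.exists_pos_forall_of_eventually
    (fun δ' δ x hδ ⟨φ, hφ, hball⟩ => ⟨φ, hφ, (Metric.ball_subset_ball hδ).trans hball⟩) ?_
  intro x₀ hx₀
  obtain ⟨φ₀, hφ₀G, hφ₀s⟩ := hAG x₀ hx₀
  obtain ⟨r, hr, hball⟩ := Metric.isOpen_iff.1 hG φ₀ hφ₀G
  have hφ₀ : I x₀ φ₀ = ENNReal.ofReal (I x₀ φ₀).toReal :=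
    (ENNReal.ofReal_toReal (hφ₀s.trans ENNReal.ofReal_lt_top).ne).symm
  refine ⟨r / 2, half_pos hr, ?_⟩
  filter_upwards [eventually_exists_ball_subset_of_tendsto_hausdorffEDist
    (hI _ ENNReal.toReal_nonneg x₀) hφ₀.le hr hball] with x ⟨φ, hφ, hφG⟩
  exact ⟨φ, hφ.trans (hφ₀ ▸ hφ₀s.le), hφG⟩

theorem EReal.neg_coe_ennreal_le_of_forall_ofReal_lt {S : ℝ≥0∞} {L : EReal}
    (h : ∀ s : ℝ, S < ENNReal.ofReal s → -(s : EReal) ≤ L) : -(S : EReal) ≤ L := by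
  refine le_of_forall_lt fun c hc => ?_
  obtain ⟨u, hcu, huS⟩ := EReal.exists_between_coe_real hc
  have hSu : (S : EReal) < (-u : ℝ) := by
    rw [EReal.coe_neg]; exact EReal.lt_neg_of_lt_neg huS
  have := h (-u) (by simpa using EReal.toENNReal_lt_toENNReal (EReal.coe_ennreal_nonneg S) hSu)
  exact hcu.trans_le (by simpa using this)

theorem EReal.neg_le_liminf_iInf_of_le_add {α ι : Type*} {l : Filter α} {A : Set ι}
    {f : α → EReal} {g : α → ι → EReal} (s : ℝ) (hf : 0 ≤ liminf f l)
    (hfg : ∀ᶠ ε in l, ∀ x ∈ A, f ε ≤ g ε x + s) :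
    -(s : EReal) ≤ liminf (fun ε => ⨅ x ∈ A, g ε x) l := by
  refine le_of_forall_lt fun c hc => ?_
  obtain ⟨u, hcu, hus⟩ := EReal.exists_between_coe_real hc
  have hu : ((u + s : ℝ) : EReal) < 0 := by
    rw [← EReal.coe_neg, EReal.coe_lt_coe_iff] at hus
    exact_mod_cast (by linarith : u + s < 0)
  refine hcu.trans_le (le_liminf_of_le (by isBoundedDefault) ?_)
  filter_upwards [eventually_lt_of_lt_liminf (hu.trans_le hf), hfg] with ε hlt hle
  refine le_iInf₂ fun x hx => ?_
  rw [EReal.coe_add] at hlt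
  exact (EReal.addLECancellable_coe s).add_le_add_iff_right.1 (hlt.trans_le (hle x hx)).le

theorem mul_log_measure_ball_add_le {Ω E : Type*} [MeasurableSpace Ω] [PseudoMetricSpace E]
    (μ : Measure Ω) (Y : Ω → E) {G : Set E} {φ : E} {δ c s : ℝ} {i : ℝ≥0∞} (hc : 0 ≤ c)
    (hs : 0 ≤ s) (hi : i ≤ ENNReal.ofReal s) (hG : Metric.ball φ δ ⊆ G) :
    (c : EReal) * ENNReal.log (μ {ω | dist (Y ω) φ < δ}) + i
      ≤ (c : EReal) * ENNReal.log (μ (Y ⁻¹' G)) + s := by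
  refine add_le_add (mul_le_mul_of_nonneg_left ?_ (by exact_mod_cast hc)) ?_
  · exact ENNReal.log_monotone (measure_mono fun ω hω => hG hω)
  · simpa [EReal.coe_ennreal_ofReal, hs] using EReal.coe_ennreal_le_coe_ennreal_iff.2 hi

theorem fwuldp_implies_dz_uniform_lower_general
    {E : Type*} [MetricSpace E]
    {E0 : Type*} [MetricSpace E0]
    {Ω : Type*} [MeasurableSpace Ω] (μ : Measure Ω)
    (X : ℝ → E0 → Ω → E)
    (a : ℝ → ℝ) (ha_pos : ∀ ε > 0, 0 < a ε)
    (I : E0 → E → ℝ≥0∞)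
    -- level sets are continuous in the Hausdorff metric
    (hHaus : ∀ s : ℝ, 0 ≤ s → ∀ (x : ℕ → E0) (x₀ : E0), Tendsto x atTop (𝓝 x₀) →
      Tendsto (fun n => EMetric.hausdorffEdist
          {φ | I (x n) φ ≤ ENNReal.ofReal s} {φ | I x₀ φ ≤ ENNReal.ofReal s})
        atTop (𝓝 (0 : ℝ≥0∞)))
    -- FWULDP lower bound over compact subsets of E0
    (hFWlow : ∀ A : Set E0, IsCompact A → ∀ s₀ > (0:ℝ), ∀ δ > (0:ℝ),
      (0 : EReal) ≤ Filter.liminf (fun ε =>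
        ⨅ x ∈ A, ⨅ φ ∈ {ψ | I x ψ ≤ ENNReal.ofReal s₀},
          ((a ε : EReal) * ENNReal.log (μ {ω | dist (X ε x ω) φ < δ})
            + (I x φ : EReal))) (𝓝[>] (0:ℝ))) :
    -- Dembo-Zeitouni uniform lower bound
    ∀ A : Set E0, IsCompact A → ∀ G : Set E, IsOpen G →
      -((⨆ x ∈ A, ⨅ φ ∈ G, I x φ : ℝ≥0∞) : EReal)
        ≤ Filter.liminf (fun ε => ⨅ x ∈ A,
            (a ε : EReal) * ENNReal.log (μ (X ε x ⁻¹' G))) (𝓝[>] (0:ℝ)) := by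
  intro A hA G hG
  refine EReal.neg_coe_ennreal_le_of_forall_ofReal_lt fun s₀ hs₀ => ?_
  have hs₀_pos : 0 < s₀ := ENNReal.ofReal_pos.1 (hs₀.trans_le' zero_le)
  have hAG : ∀ x ∈ A, ∃ φ ∈ G, I x φ < ENNReal.ofReal s₀ := fun x hx => by
    simpa only [iInf_lt_iff, exists_prop] using
      (le_iSup₂ (f := fun x (_ : x ∈ A) => ⨅ φ ∈ G, I x φ) x hx).trans_lt hs₀
  have hHaus_nhds : ∀ s : ℝ, 0 ≤ s → ∀ x₀, Tendsto (fun x => Metric.hausdorffEDist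
      {φ | I x φ ≤ ENNReal.ofReal s} {φ | I x₀ φ ≤ ENNReal.ofReal s}) (𝓝 x₀) (𝓝 0) :=
    fun s hs x₀ => tendsto_iff_seq_tendsto.2 fun x hx => hHaus s hs x x₀ hx
  obtain ⟨δ, hδ, hball⟩ := exists_pos_forall_exists_ball_subset I hHaus_nhds hA hG hAG
  refine EReal.neg_le_liminf_iInf_of_le_add s₀ (hFWlow A hA s₀ hs₀_pos δ hδ) ?_
  filter_upwards [self_mem_nhdsWithin] with ε hε x hx
  obtain ⟨φ, hφI, hφG⟩ := hball x hx
  exact (iInf₂_le_of_le x hx (iInf₂_le φ hφI)).trans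
    (mul_log_measure_ball_add_le μ (X ε x) (ha_pos ε hε).le hs₀_pos.le hφI hφG)

/-- Under Assumption B (E₀ Polish, 𝒜 the compact subsets, each Iₓ a good rate function,
and level sets continuous in the Hausdorff metric), the FWULDP over compact sets implies
the Dembo-Zeitouni uniform lower bound. -/
theorem fwuldp_implies_dz_uniform_lower
    {E : Type*} [MetricSpace E] [PolishSpace E] [MeasurableSpace E] [BorelSpace E]
    {E0 : Type*} [MetricSpace E0] [PolishSpace E0]
    {Ω : Type*} [MeasurableSpace Ω] (μ : Measure Ω) [IsProbabilityMeasure μ]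
    (X : ℝ → E0 → Ω → E) (hX : ∀ ε x, Measurable (X ε x))
    (a : ℝ → ℝ) (ha_pos : ∀ ε > 0, 0 < a ε)
    (ha : Tendsto a (𝓝[>] (0:ℝ)) (𝓝 0))
    (I : E0 → E → ℝ≥0∞) (hI : ∀ x, LowerSemicontinuous (I x))
    -- each I x is a good rate function
    (hgood : ∀ x : E0, ∀ s : ℝ, IsCompact {φ | I x φ ≤ ENNReal.ofReal s})
    -- level sets are continuous in the Hausdorff metric
    (hHaus : ∀ s : ℝ, 0 ≤ s → ∀ (x : ℕ → E0) (x₀ : E0), Tendsto x atTop (𝓝 x₀) →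
      Tendsto (fun n => EMetric.hausdorffEdist
          {φ | I (x n) φ ≤ ENNReal.ofReal s} {φ | I x₀ φ ≤ ENNReal.ofReal s})
        atTop (𝓝 (0 : ℝ≥0∞)))
    -- FWULDP lower bound over compact subsets of E0
    (hFWlow : ∀ A : Set E0, IsCompact A → ∀ s₀ > (0:ℝ), ∀ δ > (0:ℝ),
      (0 : EReal) ≤ Filter.liminf (fun ε =>
        ⨅ x ∈ A, ⨅ φ ∈ {ψ | I x ψ ≤ ENNReal.ofReal s₀},
          ((a ε : EReal) * ENNReal.log (μ {ω | dist (X ε x ω) φ < δ})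
            + (I x φ : EReal))) (𝓝[>] (0:ℝ)))
    -- FWULDP upper bound over compact subsets of E0
    (hFWup : ∀ A : Set E0, IsCompact A → ∀ s₀ > (0:ℝ), ∀ δ > (0:ℝ),
      Filter.limsup (fun ε =>
        ⨆ x ∈ A, ⨆ s ∈ Set.Icc (0:ℝ) s₀,
          ((a ε : EReal) * ENNReal.log
              (μ {ω | ENNReal.ofReal δ ≤
                  EMetric.infEdist (X ε x ω) {φ | I x φ ≤ ENNReal.ofReal s}})
            + (s : EReal))) (𝓝[>] (0:ℝ)) ≤ 0) :
    -- Dembo-Zeitouni uniform lower bound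
    ∀ A : Set E0, IsCompact A → ∀ G : Set E, IsOpen G →
      -((⨆ x ∈ A, ⨅ φ ∈ G, I x φ : ℝ≥0∞) : EReal)
        ≤ Filter.liminf (fun ε => ⨅ x ∈ A,
            (a ε : EReal) * ENNReal.log (μ (X ε x ⁻¹' G))) (𝓝[>] (0:ℝ)) :=
  fwuldp_implies_dz_uniform_lower_general μ X a ha_pos I hHaus hFWlow
end
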